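/- Let N ≥ 2, s ∈ (0,1), γ > 0. Define 𝔅 = {b ∈ ℝ^N : b_1 < b_2 < ... < b_N} and the functional 𝒱(b) = |b|²/2 + 𝒱₀(b), where 𝒱₀(b) = ((1+2s)γ)/(2s(2s-1)) · Σ_{i<j} |b_i - b_j|^{1-2s} if s ≠ 1/2 and 𝒱₀(b) = -2γ Σ_{i<j} log|b_i - b_j| if s = 1/2. Then 𝒱 is strictly convex on 𝔅: for all b ∈ 𝔅 and η ∈ ℝ^N, ⟨D²𝒱(b)η, η⟩ = |η|² + (1+2s)γ Σ_{i<j} |η_i - η_j|²/|b_i - b_j|^{1+2s} ≥ |η|². -/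

import Mathlib

open Real Finset


lemma aux_abs_rpow (r : ℝ) {w : ℝ} (hw : w ≠ 0) :
    HasDerivAt (fun x : ℝ => |x| ^ r) (r * |w| ^ (r - 2) * w) w := by
  rcases hw.lt_or_gt with h | h
  · have hev : (fun x : ℝ => |x| ^ r) =ᶠ[nhds w] fun x => (-x) ^ r := by
      filter_upwards [eventually_lt_nhds h] with x hx
      rw [abs_of_neg hx]
    have h1 : HasDerivAt (fun x : ℝ => (-x) ^ r) (r * (-w) ^ (r - 1) * (-1)) w := by
      have := (Real.hasDerivAt_rpow_const (p := r) (x := -w) (Or.inl (by linarith)))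
      exact this.comp w (hasDerivAt_neg w)
    refine (h1.congr_of_eventuallyEq hev).congr_deriv ?_
    have habs : |w| = -w := abs_of_neg h
    have : (-w) ^ (r - 1) = (-w) ^ (r - 2) * (-w) := by
      rw [show r - 1 = (r - 2) + 1 by ring, Real.rpow_add_one (by linarith : (-w) ≠ 0)]
    rw [habs, this]; ring
  · have hev : (fun x : ℝ => |x| ^ r) =ᶠ[nhds w] fun x => x ^ r := by
      filter_upwards [eventually_gt_nhds h] with x hx
      rw [abs_of_pos hx]
    have h1 : HasDerivAt (fun x : ℝ => x ^ r) (r * w ^ (r - 1)) w :=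
      Real.hasDerivAt_rpow_const (Or.inl hw)
    refine (h1.congr_of_eventuallyEq hev).congr_deriv ?_
    rw [abs_of_pos h, show r - 1 = (r - 2) + 1 by ring, Real.rpow_add_one hw]; ring

lemma aux_abs_rpow' (r : ℝ) {w : ℝ} (hw : w ≠ 0) :
    HasDerivAt (fun x : ℝ => r * |x| ^ (r - 2) * x) (r * (r - 1) * |w| ^ (r - 2)) w := by
  have h1 := ((aux_abs_rpow (r - 2) hw).mul (hasDerivAt_id' (x := w))).const_mul r
  have hfun : (fun x : ℝ => r * |x| ^ (r - 2) * x) = fun x : ℝ => r * (|x| ^ (r - 2) * x) := by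
    funext x; ring
  rw [hfun]
  refine h1.congr_deriv ?_
  have habs : (0:ℝ) < |w| := abs_pos.2 hw
  have hsq : w * w = |w| ^ (2:ℝ) := by
    rw [show (2:ℝ) = ((2:ℕ):ℝ) by norm_num, Real.rpow_natCast, sq_abs]; ring
  have key : |w| ^ (r - 2 - 2) * (w * w) = |w| ^ (r - 2) := by
    rw [hsq, ← Real.rpow_add habs]; ring_nf
  simp only [id_eq, mul_one]
  linear_combination (r * (r - 2)) * key

lemma aux_log' {w : ℝ} (hw : w ≠ 0) :
    HasDerivAt (fun x : ℝ => Real.log |x|) w⁻¹ w := by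
  have : (fun x : ℝ => Real.log |x|) = Real.log := funext fun x => Real.log_abs x
  rw [this]; exact Real.hasDerivAt_log hw

/-- General second-derivative computation for `t ↦ Σᵢ (bᵢ+tηᵢ)²/2 + c Σₚ g(dₚ + t eₚ)`. -/
lemma second_deriv_formula {N : ℕ} (b η : Fin N → ℝ) {ι : Type*} (P : Finset ι)
    (d e : ι → ℝ) (hd : ∀ p ∈ P, d p ≠ 0) (c : ℝ) (g g' g'' : ℝ → ℝ)
    (hg : ∀ x : ℝ, x ≠ 0 → HasDerivAt g (g' x) x)
    (hg' : ∀ x : ℝ, x ≠ 0 → HasDerivAt g' (g'' x) x) :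
    deriv (deriv (fun t : ℝ =>
        (∑ i, (b i + t * η i) ^ 2) / 2 + c * ∑ p ∈ P, g (d p + t * e p))) 0 =
      (∑ i, (η i) ^ 2) + c * ∑ p ∈ P, g'' (d p) * (e p) ^ 2 := by
  have hl : ∀ (v w : ℝ) (t : ℝ), HasDerivAt (fun t : ℝ => v + t * w) w t := by
    intro v w t
    simpa using ((hasDerivAt_id t).mul_const w).const_add v
  set F : ℝ → ℝ := fun t =>
    (∑ i, (b i + t * η i) * η i) + c * ∑ p ∈ P, g' (d p + t * e p) * e p with hFdef
  have hU : ∀ᶠ t in nhds (0:ℝ), ∀ p ∈ P, d p + t * e p ≠ 0 := by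
    rw [Filter.eventually_all_finset]
    intro p hp
    have hc : ContinuousAt (fun t : ℝ => d p + t * e p) 0 := by fun_prop
    have := hc.eventually_ne (y := (0:ℝ)) (by simpa using hd p hp)
    simpa using this
  have hF : ∀ t : ℝ, (∀ p ∈ P, d p + t * e p ≠ 0) →
      HasDerivAt (fun t : ℝ =>
        (∑ i, (b i + t * η i) ^ 2) / 2 + c * ∑ p ∈ P, g (d p + t * e p)) (F t) t := by
    intro t ht
    have h1 : HasDerivAt (fun t : ℝ => (∑ i, (b i + t * η i) ^ 2) / 2)
        (∑ i, (b i + t * η i) * η i) t := by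
      have : HasDerivAt (fun t : ℝ => ∑ i, (b i + t * η i) ^ 2)
          (∑ i, 2 * (b i + t * η i) ^ 1 * η i) t :=
        HasDerivAt.fun_sum fun i _ => (hl (b i) (η i) t).pow 2
      refine (this.div_const 2).congr_deriv ?_
      rw [Finset.sum_div]
      refine Finset.sum_congr rfl fun i _ => by ring
    have h2 : HasDerivAt (fun t : ℝ => c * ∑ p ∈ P, g (d p + t * e p))
        (c * ∑ p ∈ P, g' (d p + t * e p) * e p) t := by
      refine HasDerivAt.const_mul c ?_
      exact HasDerivAt.fun_sum fun p hp =>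
        (hg _ (ht p hp)).comp t (hl (d p) (e p) t)
    exact h1.add h2
  have hde : deriv (fun t : ℝ =>
      (∑ i, (b i + t * η i) ^ 2) / 2 + c * ∑ p ∈ P, g (d p + t * e p)) =ᶠ[nhds (0:ℝ)] F :=
    hU.mono fun t ht => (hF t ht).deriv
  rw [hde.deriv_eq]
  have h0 : ∀ p ∈ P, d p + (0:ℝ) * e p ≠ 0 := by
    intro p hp; simpa using hd p hp
  have hF0 : HasDerivAt F ((∑ i, (η i) ^ 2) + c * ∑ p ∈ P, g'' (d p) * (e p) ^ 2) 0 := by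
    have h1 : HasDerivAt (fun t : ℝ => ∑ i, (b i + t * η i) * η i)
        (∑ i, η i * η i) (0:ℝ) :=
      HasDerivAt.fun_sum fun i _ => (hl (b i) (η i) 0).mul_const (η i)
    have h2 : HasDerivAt (fun t : ℝ => c * ∑ p ∈ P, g' (d p + t * e p) * e p)
        (c * ∑ p ∈ P, (g'' (d p) * e p) * e p) (0:ℝ) := by
      refine HasDerivAt.const_mul c ?_
      refine HasDerivAt.fun_sum fun p hp => ?_
      have hcomp : HasDerivAt (fun t : ℝ => g' (d p + t * e p)) (g'' (d p) * e p) 0 := by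
        have hpt : HasDerivAt g' (g'' (d p)) ((fun t : ℝ => d p + t * e p) 0) := by
          simpa using hg' (d p) (hd p hp)
        exact hpt.comp 0 (hl (d p) (e p) 0)
      exact hcomp.mul_const (e p)
    refine (h1.add h2).congr_deriv ?_
    congr 1
    · exact Finset.sum_congr rfl fun i _ => (sq (η i)).symm
    · congr 1
      exact Finset.sum_congr rfl fun p _ => by ring
  exact hF0.deriv

/-- Strict convexity of the renormalized energy `𝒱` on the cone of increasing
`N`-tuples: the second derivative of `𝒱` along any direction `η` at any `b ∈ 𝔅`
equals `|η|² + (1+2s)γ Σ_{i<j} |η_i-η_j|²/|b_i-b_j|^{1+2s} ≥ |η|²`. -/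
theorem stmt_0 (N : ℕ) (hN : 2 ≤ N) (s γ : ℝ) (hs0 : 0 < s) (hs1 : s < 1) (hγ : 0 < γ)
    (V : (Fin N → ℝ) → ℝ)
    (hV : ∀ b : Fin N → ℝ,
      V b = (∑ i, (b i) ^ 2) / 2 +
        (if s ≠ 1/2 then
          ((1 + 2*s) * γ / (2*s*(2*s - 1))) *
            ∑ p ∈ Finset.univ.filter (fun p : Fin N × Fin N => p.1 < p.2),
              |b p.1 - b p.2| ^ (1 - 2*s)
        else
          (-2*γ) * ∑ p ∈ Finset.univ.filter (fun p : Fin N × Fin N => p.1 < p.2),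
              Real.log |b p.1 - b p.2|)) :
    ∀ b : Fin N → ℝ, StrictMono b → ∀ η : Fin N → ℝ,
      deriv (deriv (fun t : ℝ => V (b + t • η))) 0 =
        (∑ i, (η i) ^ 2) +
          (1 + 2*s) * γ *
            ∑ p ∈ Finset.univ.filter (fun p : Fin N × Fin N => p.1 < p.2),
              (η p.1 - η p.2) ^ 2 / |b p.1 - b p.2| ^ (1 + 2*s) ∧
      (∑ i, (η i) ^ 2) ≤
        (∑ i, (η i) ^ 2) +
          (1 + 2*s) * γ *
            ∑ p ∈ Finset.univ.filter (fun p : Fin N × Fin N => p.1 < p.2),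
              (η p.1 - η p.2) ^ 2 / |b p.1 - b p.2| ^ (1 + 2*s) := by
  intro b hb η
  set P : Finset (Fin N × Fin N) :=
    Finset.univ.filter (fun p : Fin N × Fin N => p.1 < p.2) with hP
  have hd : ∀ p ∈ P, b p.1 - b p.2 ≠ 0 := by
    intro p hp
    have : p.1 < p.2 := (Finset.mem_filter.1 hp).2
    exact sub_ne_zero_of_ne (ne_of_lt (hb this))
  have hnonneg : 0 ≤ (1 + 2*s) * γ *
      ∑ p ∈ P, (η p.1 - η p.2) ^ 2 / |b p.1 - b p.2| ^ (1 + 2*s) := by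
    apply mul_nonneg (by positivity)
    apply Finset.sum_nonneg
    intro p hp
    exact div_nonneg (sq_nonneg _) (Real.rpow_nonneg (abs_nonneg _) _)
  refine ⟨?_, le_add_of_nonneg_right hnonneg⟩
  have harg : ∀ (t : ℝ) (p : Fin N × Fin N),
      (b + t • η) p.1 - (b + t • η) p.2 = (b p.1 - b p.2) + t * (η p.1 - η p.2) := by
    intro t p
    simp only [Pi.add_apply, Pi.smul_apply, smul_eq_mul]
    ring
  by_cases hs : s ≠ 1/2
  · -- rpow case
    have hfun : (fun t : ℝ => V (b + t • η)) = fun t : ℝ =>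
        (∑ i, (b i + t * η i) ^ 2) / 2 +
          ((1 + 2*s) * γ / (2*s*(2*s - 1))) *
            ∑ p ∈ P, (fun x : ℝ => |x| ^ (1 - 2*s))
              ((b p.1 - b p.2) + t * (η p.1 - η p.2)) := by
      funext t
      rw [hV, if_pos hs]
      simp only [Pi.add_apply, Pi.smul_apply, smul_eq_mul]
      congr 2
      refine Finset.sum_congr rfl fun p _ => ?_
      rw [show b p.1 + t * η p.1 - (b p.2 + t * η p.2)
        = (b p.1 - b p.2) + t * (η p.1 - η p.2) by ring]
    rw [hfun, second_deriv_formula b η P _ _ hd _ _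
      (fun x : ℝ => (1 - 2*s) * |x| ^ ((1 - 2*s) - 2) * x)
      (fun x : ℝ => (1 - 2*s) * ((1 - 2*s) - 1) * |x| ^ ((1 - 2*s) - 2))
      (fun x hx => aux_abs_rpow _ hx) (fun x hx => aux_abs_rpow' _ hx)]
    congr 1
    rw [Finset.mul_sum, Finset.mul_sum]
    refine Finset.sum_congr rfl fun p hp => ?_
    have habs : (0:ℝ) < |b p.1 - b p.2| := abs_pos.2 (hd p hp)
    have hpow : (0:ℝ) < |b p.1 - b p.2| ^ (1 + 2*s) := Real.rpow_pos_of_pos habs _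
    have hne : 2*s*(2*s - 1) ≠ 0 := by
      apply mul_ne_zero (by positivity)
      intro h; apply hs; linarith
    have hne' : 2*s - 1 ≠ 0 := by intro h; apply hs; linarith
    rw [show (1 - 2*s) - 2 = -(1 + 2*s) by ring, Real.rpow_neg (abs_nonneg _)]
    field_simp
    ring
  · -- log case
    rw [not_not] at hs
    subst hs
    have hfun : (fun t : ℝ => V (b + t • η)) = fun t : ℝ =>
        (∑ i, (b i + t * η i) ^ 2) / 2 +
          (-2*γ) * ∑ p ∈ P, (fun x : ℝ => Real.log |x|)
              ((b p.1 - b p.2) + t * (η p.1 - η p.2)) := by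
      funext t
      rw [hV, if_neg (by norm_num)]
      simp only [Pi.add_apply, Pi.smul_apply, smul_eq_mul]
      congr 2
      refine Finset.sum_congr rfl fun p _ => ?_
      rw [show b p.1 + t * η p.1 - (b p.2 + t * η p.2)
        = (b p.1 - b p.2) + t * (η p.1 - η p.2) by ring]
    rw [hfun, second_deriv_formula b η P _ _ hd _ _
      (fun x : ℝ => x⁻¹) (fun x : ℝ => -(x^2)⁻¹)
      (fun x hx => aux_log' hx) (fun x hx => hasDerivAt_inv hx)]
    congr 1
    rw [Finset.mul_sum, Finset.mul_sum]
    refine Finset.sum_congr rfl fun p hp => ?_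
    have hdp := hd p hp
    rw [show (1:ℝ) + 2*(1/2) = 2 by norm_num, Real.rpow_two, sq_abs]
    field_simp
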